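/- arXiv:1306.4290 — 6 statements merged into one kernel-verified Lean document; each statement's English description precedes it below -/
import Mathlib

section
/- Let F have characteristic 0, α ∈ F nonzero. Then the h(1)-module F[X] with action z ↦ α·I, x ↦ α·d/dX, y ↦ multiplication by X, is irreducible: its only h(1)-invariant subspaces are 0 and F[X]. -/
/-!
Repeated differentiation lowers the degree of a nonzero polynomial until, in characteristic
zero, a nonzero constant is reached; so a nonzero submodule stable under `d/dX` (which is
`α⁻¹ • R x`) contains `1`. Multiplying by `X` (which is `R y`) then produces every monomial.
-/

/-- `X`, `Y`, `z` form a symplectic basis of a Heisenberg Lie algebra `L` of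
dimension `2n+1` over `F`: they are a basis of `L`, with brackets
`⁅X i, Y i⁆ = z` and all other brackets of basis vectors zero. -/
structure IsHeisenbergBasis (F : Type*) [Field F] {n : ℕ} {L : Type*}
    [LieRing L] [LieAlgebra F L] (X Y : Fin n → L) (z : L) : Prop where
  indep : LinearIndependent F (Sum.elim X (Sum.elim Y fun _ : Unit => z))
  span : Submodule.span F (Set.range (Sum.elim X (Sum.elim Y fun _ : Unit => z))) = ⊤
  lie_xy : ∀ i j, ⁅X i, Y j⁆ = if i = j then z else 0
  lie_xx : ∀ i j, ⁅X i, X j⁆ = 0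
  lie_yy : ∀ i j, ⁅Y i, Y j⁆ = 0
  lie_xz : ∀ i, ⁅X i, z⁆ = 0
  lie_yz : ∀ i, ⁅Y i, z⁆ = 0

attribute [local instance 100] LieRing.ofAssociativeRing

open Polynomial

namespace Polynomial

theorem one_mem_of_derivative_mem {K : Type*} [Field K] [CharZero K] {U : Submodule K K[X]}
    (hU : ∀ p ∈ U, derivative p ∈ U) {p : K[X]} (hp : p ∈ U) (hp0 : p ≠ 0) :
    (1 : K[X]) ∈ U := by
  induction hn : p.natDegree using Nat.strong_induction_on generalizing p with
  | _ n ih =>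
    by_cases hdeg : p.natDegree = 0
    · obtain ⟨c, rfl⟩ := natDegree_eq_zero.mp hdeg
      have hc : c ≠ 0 := by rintro rfl; exact hp0 C_0
      simpa [smul_C, inv_mul_cancel₀ hc] using U.smul_mem c⁻¹ hp
    · exact ih _ (hn ▸ natDegree_derivative_lt hdeg) (hU p hp) (derivative_ne_zero.mpr hdeg) rfl

theorem submodule_eq_top_of_X_mul_mem {R : Type*} [CommSemiring R] {U : Submodule R R[X]}
    (hU : ∀ p ∈ U, X * p ∈ U) (h1 : (1 : R[X]) ∈ U) : U = ⊤ := by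
  have hXpow (n : ℕ) : (X : R[X]) ^ n ∈ U := by
    induction n with
    | zero => simpa using h1
    | succ n ih => simpa [pow_succ'] using hU _ ih
  refine Submodule.eq_top_iff'.mpr fun q => ?_
  induction q using Polynomial.induction_on' with
  | add p q hp hq => exact U.add_mem hp hq
  | monomial n a => simpa [smul_X_eq_monomial] using U.smul_mem a (hXpow n)

end Polynomial

theorem heisenberg_polynomial_module_irreducible_char_zero_general
    (F : Type*) [Field F] [CharZero F] {L : Type*} [LieRing L] [LieAlgebra F L]
    (X Y : Fin 1 → L)
    (α : F) (hα : α ≠ 0)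
    (R : L →ₗ⁅F⁆ Module.End F (Polynomial F))
    (hx : R (X 0) = α • (Polynomial.derivative : Polynomial F →ₗ[F] Polynomial F))
    (hy : R (Y 0) = LinearMap.mulLeft F Polynomial.X)
    (U : Submodule F (Polynomial F))
    (hU : ∀ a : L, ∀ v ∈ U, R a v ∈ U) :
    U = ⊥ ∨ U = ⊤ := by
  refine or_iff_not_imp_left.mpr fun hbot => ?_
  obtain ⟨p, hp, hp0⟩ := Submodule.exists_mem_ne_zero_of_ne_bot hbot
  have hder : ∀ p ∈ U, derivative p ∈ U := fun p hp => by
    simpa [hx, smul_smul, inv_mul_cancel₀ hα] using U.smul_mem α⁻¹ (hU (X 0) p hp)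
  have hmul : ∀ p ∈ U, Polynomial.X * p ∈ U := fun p hp => by
    simpa [hy] using hU (Y 0) p hp
  exact submodule_eq_top_of_X_mul_mem hmul (one_mem_of_derivative_mem hder hp hp0)

theorem heisenberg_polynomial_module_irreducible_char_zero
    (F : Type*) [Field F] [CharZero F] {L : Type*} [LieRing L] [LieAlgebra F L]
    (X Y : Fin 1 → L) (z : L) (hH : IsHeisenbergBasis F X Y z)
    (α : F) (hα : α ≠ 0)
    (R : L →ₗ⁅F⁆ Module.End F (Polynomial F))
    (hz : R z = α • 1)
    (hx : R (X 0) = α • (Polynomial.derivative : Polynomial F →ₗ[F] Polynomial F))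
    (hy : R (Y 0) = LinearMap.mulLeft F Polynomial.X)
    (U : Submodule F (Polynomial F))
    (hU : ∀ a : L, ∀ v ∈ U, R a v ∈ U) :
    U = ⊥ ∨ U = ⊤ :=
  heisenberg_polynomial_module_irreducible_char_zero_general F X Y α hα R hx hy U hU
end

section
/- Let F be a field of prime characteristic p, and let R: h(n) → gl(V) be a faithful finite-dimensional irreducible representation over an algebraically closed field F. Then dim V = p^n. -/
attribute [local instance] LieRing.ofAssociativeRing

/-!
The central element `z` acts by a nonzero scalar `c` (Schur's lemma and faithfulness), so
`A i = R (X i)` and `B i = c⁻¹ • R (Y i)` satisfy the canonical commutation relations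
`[A i, B j] = δ i j`. In characteristic `p` the relation `[A, B ^ m] = m • B ^ (m - 1)` makes
every `B i ^ p` central, hence scalar. After shifting the commuting `A i` by the eigenvalues of a
common eigenvector `v`, the monomials `B ^ k v` with exponents `k i < p` span an invariant
subspace, which is all of `V`; they are linearly independent because they are eigenvectors of
the number operators `B i * A i` with the pairwise distinct eigenvalue tuples `k mod p`.
-/

open Function

namespace Module.End

variable {K V : Type*} [Field K] [IsAlgClosed K] [AddCommGroup V] [Module K V]
  [FiniteDimensional K V]

theorem exists_forall_apply_eq_smul [Nontrivial V] {ι : Type*} [Finite ι] (f : ι → End K V)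
    (hf : ∀ i j, Commute (f i) (f j)) : ∃ v ≠ 0, ∃ μ : ι → K, ∀ i, f i v = μ i • v := by
  classical
  have := Fintype.ofFinite ι
  suffices ∀ s : Finset ι, ∃ U : Submodule K V, U ≠ ⊥ ∧ (∀ j, U ≤ U.comap (f j)) ∧
      ∀ i ∈ s, ∃ μ, U ≤ (f i).eigenspace μ by
    obtain ⟨U, hU, -, hμ⟩ := this Finset.univ
    choose μ hμ using fun i => hμ i (Finset.mem_univ i)
    obtain ⟨v, hvU, hv0⟩ := U.ne_bot_iff.mp hU
    exact ⟨v, hv0, μ, fun i => mem_eigenspace_iff.mp (hμ i hvU)⟩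
  intro s
  induction s using Finset.induction_on with
  | empty => exact ⟨⊤, top_ne_bot, fun _ => le_top, by simp⟩
  | insert a s _ ih =>
    obtain ⟨U, hU, hinv, hμ⟩ := ih
    have := Submodule.nontrivial_iff_ne_bot.mpr hU
    obtain ⟨μ, hμa⟩ := exists_eigenvalue ((f a).restrict (hinv a))
    obtain ⟨⟨u, huU⟩, hu⟩ := hμa.exists_hasEigenvector
    refine ⟨U ⊓ (f a).eigenspace μ, ?_, fun j => ?_, ?_⟩
    · refine (Submodule.ne_bot_iff _).mpr ⟨u, ⟨huU, ?_⟩, fun hu0 => hu.2 (by simpa using hu0)⟩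
      simpa [Subtype.ext_iff] using hu.apply_eq_smul
    · rw [Submodule.comap_inf]
      exact inf_le_inf (hinv j) fun x hx => mapsTo_genEigenspace_of_comm (hf a j) μ 1 hx
    · exact Finset.forall_mem_insert _ _ _ |>.mpr ⟨⟨μ, inf_le_right⟩,
        fun i hi => (hμ i hi).imp fun _ h => inf_le_left.trans h⟩

theorem exists_eq_algebraMap_of_forall_commute {ι : Type*} (ρ : ι → End K V)
    (hirr : ∀ U : Submodule K V, (∀ a, ∀ v ∈ U, ρ a v ∈ U) → U = ⊥ ∨ U = ⊤) {T : End K V}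
    (hT : ∀ a, Commute (ρ a) T) : ∃ μ : K, T = algebraMap K _ μ := by
  rcases subsingleton_or_nontrivial V with hV | hV
  · exact ⟨0, Subsingleton.elim _ _⟩
  obtain ⟨μ, hμ⟩ := T.exists_eigenvalue
  have htop : T.eigenspace μ = ⊤ :=
    (hirr _ fun a x hx => mapsTo_genEigenspace_of_comm (hT a).symm μ 1 hx).resolve_left hμ
  exact ⟨μ, LinearMap.ext fun x => by
    simpa using mem_eigenspace_iff.mp (htop ▸ Submodule.mem_top : x ∈ T.eigenspace μ)⟩

end Module.End

section WeylRelations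

variable {E : Type*} [Ring E]

theorem mul_pow_of_mul_sub_mul_eq_one {a b : E} (h : a * b - b * a = 1) (m : ℕ) :
    a * b ^ m = b ^ m * a + m • b ^ (m - 1) := by
  have hab : a * b = b * a + 1 := by rw [← h, add_sub_cancel]
  induction m with
  | zero => simp
  | succ m ih =>
    have hm : m • (b ^ (m - 1) * b) = m • b ^ m := by
      rcases m.eq_zero_or_pos with rfl | hm
      · simp
      · rw [pow_sub_one_mul hm.ne']
    calc a * b ^ (m + 1) = (a * b ^ m) * b := by rw [pow_succ, mul_assoc]
      _ = b ^ m * (a * b) + m • (b ^ (m - 1) * b) := by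
        rw [ih, add_mul, mul_assoc, smul_mul_assoc]
      _ = b ^ (m + 1) * a + (m + 1) • b ^ m := by
        rw [hab, hm, mul_add, mul_one, ← mul_assoc, ← pow_succ, add_smul, one_smul,
          add_assoc, add_comm (b ^ m)]

theorem commute_pow_of_mul_sub_mul_eq_one {a b : E} (h : a * b - b * a = 1) {p : ℕ}
    (hp : (p : E) = 0) : Commute a (b ^ p) := by
  rw [commute_iff_eq, mul_pow_of_mul_sub_mul_eq_one h, nsmul_eq_mul, hp, zero_mul, add_zero]

structure IsWeylFamily {ι : Type*} [DecidableEq ι] (A B : ι → E) : Prop where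
  commute_left : ∀ i j, Commute (A i) (A j)
  commute_right : ∀ i j, Commute (B i) (B j)
  mul_sub_mul : ∀ i j, A i * B j - B j * A i = if i = j then 1 else 0

namespace IsWeylFamily

variable {ι : Type*} [DecidableEq ι] {A B : ι → E} (h : IsWeylFamily A B)
include h

theorem mul_sub_mul_self (i : ι) : A i * B i - B i * A i = 1 := by
  simpa using h.mul_sub_mul i i

theorem commute_of_ne {i j : ι} (hij : i ≠ j) : Commute (A i) (B j) :=
  sub_eq_zero.mp (by simpa [hij] using h.mul_sub_mul i j)

theorem commute_pow {p : ℕ} (hp : (p : E) = 0) (i j : ι) : Commute (A i) (B j ^ p) := by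
  obtain rfl | hij := eq_or_ne i j
  · exact commute_pow_of_mul_sub_mul_eq_one (h.mul_sub_mul_self i) hp
  · exact (h.commute_of_ne hij).pow_right p

theorem commute_mul_mul (i j : ι) : Commute (B i * A i) (B j * A j) := by
  obtain rfl | hij := eq_or_ne i j
  · exact Commute.refl _
  · exact .mul_left (.mul_right (h.commute_right i j) (h.commute_of_ne hij.symm).symm)
      (.mul_right (h.commute_of_ne hij) (h.commute_left i j))

theorem sub_algebraMap {R : Type*} [CommRing R] [Algebra R E] (μ : ι → R) :
    IsWeylFamily (fun i => A i - algebraMap R E (μ i)) B where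
  commute_left i j :=
    ((h.commute_left i j).sub_right (Algebra.commute_algebraMap_right _ _)).sub_left
      ((Algebra.commute_algebraMap_left _ _).sub_right (Algebra.commute_algebraMap_left _ _))
  commute_right := h.commute_right
  mul_sub_mul i j := by
    rw [sub_mul, mul_sub, Algebra.commutes, ← h.mul_sub_mul i j]
    abel

end IsWeylFamily

end WeylRelations

section PowProd

variable {M : Type*} [Monoid M] {ι : Type*} [Fintype ι] (B : ι → M)
  (hB : ∀ i j, Commute (B i) (B j))

noncomputable def powProd (k : ι → ℕ) : M :=
  Finset.univ.noncommProd (fun i => B i ^ k i)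
    (show Set.Pairwise _ _ from fun i _ j _ _ => (hB i j).pow_pow _ _)

theorem powProd_zero : powProd B hB 0 = 1 :=
  (Finset.noncommProd_eq_pow_card _ _ _ 1 fun _ _ => pow_zero _).trans (one_pow _)

variable [DecidableEq ι]

theorem powProd_update (k : ι → ℕ) (i : ι) (m : ℕ) :
    powProd B hB (update k i m) = B i ^ m * powProd B hB (update k i 0) := by
  simp only [powProd]
  rw [← Finset.mul_noncommProd_erase _ (Finset.mem_univ i),
    ← Finset.mul_noncommProd_erase _ (Finset.mem_univ i)]
  simp only [update_self, pow_zero, one_mul]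
  exact congrArg _ (Finset.noncommProd_congr rfl (fun j hj => by
    rw [update_of_ne (Finset.ne_of_mem_erase hj), update_of_ne (Finset.ne_of_mem_erase hj)]) _)

theorem powProd_eq_pow_mul (k : ι → ℕ) (i : ι) :
    powProd B hB k = B i ^ k i * powProd B hB (update k i 0) := by
  simpa using powProd_update B hB k i (k i)

theorem mul_powProd_update (k : ι → ℕ) (i : ι) (m : ℕ) :
    B i * powProd B hB (update k i m) = powProd B hB (update k i (m + 1)) := by
  rw [powProd_update, powProd_update _ _ _ _ (m + 1), ← mul_assoc, pow_succ']

theorem commute_powProd_update_zero {x : M} {i : ι} (hx : ∀ j, j ≠ i → Commute x (B j))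
    (k : ι → ℕ) : Commute x (powProd B hB (update k i 0)) := by
  refine Finset.noncommProd_commute _ _ _ _ fun j _ => ?_
  obtain rfl | hji := eq_or_ne j i
  · simp
  · rw [update_of_ne hji]
    exact (hx j hji).pow_right _

end PowProd

theorem IsWeylFamily.mul_powProd {E : Type*} [Ring E] {ι : Type*} [Fintype ι] [DecidableEq ι]
    {A B : ι → E} (h : IsWeylFamily A B) (k : ι → ℕ) (i : ι) :
    A i * powProd B h.commute_right k = powProd B h.commute_right k * A i
      + k i • powProd B h.commute_right (update k i (k i - 1)) := by
  have hP : Commute (A i) (powProd B h.commute_right (update k i 0)) :=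
    commute_powProd_update_zero _ _ (fun j hj => h.commute_of_ne hj.symm) k
  rw [powProd_update _ _ k i, powProd_eq_pow_mul _ _ k i, ← mul_assoc,
    mul_pow_of_mul_sub_mul_eq_one (h.mul_sub_mul_self i), add_mul, mul_assoc, hP.eq,
    ← mul_assoc, smul_mul_assoc]

section WeylModule

variable {F V : Type*} [Field F] [AddCommGroup V] [Module F V] {ι : Type*} [Fintype ι]
  {B : ι → Module.End F V} (hB : ∀ i j, Commute (B i) (B j)) (v : V) (p : ℕ)

noncomputable def powProdSpan : Submodule F V :=
  Submodule.span F (Set.range fun k : ι → Fin p => powProd B hB (fun i => k i) v)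

variable {p}

theorem powProd_apply_mem_powProdSpan {k : ι → ℕ} (hk : ∀ i, k i < p) :
    powProd B hB k v ∈ powProdSpan hB v p :=
  Submodule.subset_span ⟨fun i => ⟨k i, hk i⟩, rfl⟩

variable [DecidableEq ι] {v}

theorem powProdSpan_le_comap_of_pow_eq_algebraMap {i : ι} {γ : F}
    (hBp : B i ^ p = algebraMap F _ γ) (hp : 0 < p) :
    powProdSpan hB v p ≤ (powProdSpan hB v p).comap (B i) := by
  refine Submodule.span_le.mpr (Set.range_subset_iff.mpr fun k => ?_)
  set k' : ι → ℕ := fun j => k j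
  have hk' : ∀ j, k' j < p := fun j => (k j).isLt
  change B i (powProd B hB k' v) ∈ powProdSpan hB v p
  rw [← update_eq_self i k', ← Module.End.mul_apply, mul_powProd_update]
  obtain hlt | heq : k' i + 1 < p ∨ k' i + 1 = p := Nat.lt_or_eq_of_le (hk' i)
  · exact powProd_apply_mem_powProdSpan hB v
      ((forall_update_iff k' fun _ m => m < p).mpr ⟨hlt, fun j _ => hk' j⟩)
  · rw [heq, powProd_update, hBp, ← Algebra.smul_def, LinearMap.smul_apply]
    exact Submodule.smul_mem _ _ (powProd_apply_mem_powProdSpan hB v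
      ((forall_update_iff k' fun _ m => m < p).mpr ⟨hp, fun j _ => hk' j⟩))

namespace IsWeylFamily

variable {A : ι → Module.End F V} (h : IsWeylFamily A B) (hv : ∀ i, A i v = 0)
include h hv

theorem apply_powProd_apply (k : ι → ℕ) (i : ι) :
    A i (powProd B h.commute_right k v)
      = (k i : F) • powProd B h.commute_right (update k i (k i - 1)) v := by
  rw [← Module.End.mul_apply, h.mul_powProd, LinearMap.add_apply, Module.End.mul_apply, hv,
    map_zero, zero_add, LinearMap.smul_apply, Nat.cast_smul_eq_nsmul]

theorem mul_apply_powProd_apply (k : ι → ℕ) (i : ι) :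
    (B i * A i) (powProd B h.commute_right k v) = (k i : F) • powProd B h.commute_right k v := by
  rw [Module.End.mul_apply, h.apply_powProd_apply hv, map_smul, ← Module.End.mul_apply,
    mul_powProd_update]
  rcases (k i).eq_zero_or_pos with hk | hk
  · simp [hk]
  · rw [Nat.sub_add_cancel hk, update_eq_self]

theorem powProdSpan_le_comap (i : ι) :
    powProdSpan h.commute_right v p ≤ (powProdSpan h.commute_right v p).comap (A i) := by
  refine Submodule.span_le.mpr (Set.range_subset_iff.mpr fun k => ?_)
  rw [SetLike.mem_coe, Submodule.mem_comap, h.apply_powProd_apply hv]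
  exact Submodule.smul_mem _ _ (powProd_apply_mem_powProdSpan _ v
    ((forall_update_iff _ fun _ m => m < p).mpr
      ⟨(k i).isLt.trans_le' (Nat.sub_le _ 1), fun j _ => (k j).isLt⟩))

variable [CharP F p]

theorem powProd_apply_ne_zero (hv0 : v ≠ 0) (k : ι → ℕ) (hk : ∀ i, k i < p) :
    powProd B h.commute_right k v ≠ 0 := by
  induction k using WellFoundedLT.induction with
  | _ k ih =>
  by_cases hk0 : k = 0
  · subst hk0
    rwa [powProd_zero, Module.End.one_apply]
  obtain ⟨i, hi⟩ : ∃ i, k i ≠ 0 := ne_iff.mp hk0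
  have hki : (k i : F) ≠ 0 := by
    rw [Ne, CharP.cast_eq_zero_iff F p]
    exact fun hdvd => hi (Nat.eq_zero_of_dvd_of_lt hdvd (hk i))
  have hlt : update k i (k i - 1) < k := update_lt_self_iff.mpr (by omega)
  intro h0
  have := h.apply_powProd_apply hv k i
  rw [h0, map_zero, eq_comm, smul_eq_zero] at this
  exact this.elim hki (ih _ hlt fun j => (hlt.le j).trans_lt (hk j))

theorem linearIndependent_powProd_apply (hv0 : v ≠ 0) :
    LinearIndependent F fun k : ι → Fin p => powProd B h.commute_right (fun i => k i) v := by
  have hindep := Module.End.independent_iInf_maxGenEigenspace_of_forall_mapsTo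
    (fun i => B i * A i)
    fun i j φ => Module.End.mapsTo_genEigenspace_of_comm (h.commute_mul_mul j i) φ ⊤
  have hinj : Injective fun (k : ι → Fin p) (i : ι) => ((k i : ℕ) : F) := fun k l hkl =>
    funext fun i => Fin.ext (CharP.natCast_injOn_Iio F p (k i).isLt (l i).isLt (congrFun hkl i))
  refine (hindep.comp hinj).linearIndependent _ (fun k => Submodule.mem_iInf _ |>.mpr fun i => ?_)
    fun k => h.powProd_apply_ne_zero hv hv0 _ fun i => (k i).isLt
  exact Module.End.eigenspace_le_maxGenEigenspace
    (Module.End.mem_eigenspace_iff.mpr (h.mul_apply_powProd_apply hv _ i))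

theorem finrank_eq_pow [FiniteDimensional F V] (hp : 0 < p) (hv0 : v ≠ 0)
    (hBp : ∀ i, ∃ γ : F, B i ^ p = algebraMap F _ γ)
    (hirr : ∀ U : Submodule F V, (∀ i, ∀ x ∈ U, A i x ∈ U) → (∀ i, ∀ x ∈ U, B i x ∈ U) →
      U = ⊥ ∨ U = ⊤) :
    Module.finrank F V = p ^ Fintype.card ι := by
  have hvW : v ∈ powProdSpan h.commute_right v p := by
    simpa [powProd_zero] using powProd_apply_mem_powProdSpan h.commute_right v (k := 0) fun _ => hp
  have hB_le (i : ι) :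
      powProdSpan h.commute_right v p ≤ (powProdSpan h.commute_right v p).comap (B i) := by
    obtain ⟨γ, hγ⟩ := hBp i
    exact powProdSpan_le_comap_of_pow_eq_algebraMap _ hγ hp
  have hW : powProdSpan h.commute_right v p = ⊤ :=
    (hirr _ (fun i => h.powProdSpan_le_comap hv i) hB_le).resolve_left fun hbot =>
      hv0 (by rwa [hbot, Submodule.mem_bot] at hvW)
  rw [← finrank_top F V, ← hW, powProdSpan,
    finrank_span_eq_card (h.linearIndependent_powProd_apply hv hv0), Fintype.card_fun,
    Fintype.card_fin]

end IsWeylFamily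

end WeylModule

theorem LieHom.commute_apply_of_lie_eq_zero {F L E : Type*} [CommRing F] [LieRing L]
    [LieAlgebra F L] [Ring E] [Algebra F E] (R : L →ₗ⁅F⁆ E) {a b : L} (hab : ⁅a, b⁆ = 0) :
    Commute (R a) (R b) :=
  commute_iff_lie_eq.mpr (by rw [← R.map_lie, hab, map_zero])

namespace IsHeisenbergBasis

variable {F : Type*} [Field F] {n : ℕ} {L : Type*} [LieRing L] [LieAlgebra F L]
  {X Y : Fin n → L} {z : L} (hH : IsHeisenbergBasis F X Y z)
include hH

theorem z_ne_zero : z ≠ 0 :=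
  hH.indep.ne_zero (Sum.inr (Sum.inr ()))

theorem map_mem {M : Type*} [AddCommGroup M] [Module F M] (f : L →ₗ[F] M) {S : Submodule F M}
    (hX : ∀ i, f (X i) ∈ S) (hY : ∀ i, f (Y i) ∈ S) (hz : f z ∈ S) (a : L) : f a ∈ S := by
  have hle : Submodule.span F (Set.range (Sum.elim X (Sum.elim Y fun _ : Unit => z)))
      ≤ S.comap f :=
    Submodule.span_le.mpr <| Set.range_subset_iff.mpr fun
      | .inl i => hX i
      | .inr (.inl i) => hY i
      | .inr (.inr _) => hz
  exact hle (hH.span ▸ Submodule.mem_top)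

theorem commute_map {E : Type*} [Ring E] [Algebra F E] (f : L →ₗ[F] E) {T : E}
    (hX : ∀ i, Commute (f (X i)) T) (hY : ∀ i, Commute (f (Y i)) T) (hz : Commute (f z) T)
    (a : L) : Commute (f a) T := by
  have key (b : L) : Commute (f b) T ↔ f b ∈ (Subalgebra.centralizer F {T}).toSubmodule := by
    simp [Subalgebra.mem_centralizer_iff, commute_iff_eq, eq_comm]
  exact (key a).mpr (hH.map_mem f (fun i => (key _).mp (hX i)) (fun i => (key _).mp (hY i))
    ((key z).mp hz) a)

theorem map_apply_mem {V : Type*} [AddCommGroup V] [Module F V] (f : L →ₗ[F] Module.End F V)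
    {U : Submodule F V} (hX : ∀ i, ∀ x ∈ U, f (X i) x ∈ U) (hY : ∀ i, ∀ x ∈ U, f (Y i) x ∈ U)
    (hz : ∀ x ∈ U, f z x ∈ U) (a : L) : ∀ x ∈ U, f a x ∈ U :=
  hH.map_mem f (S := U.compatibleMaps U) hX hY hz a

section Algebra

variable {E : Type*} [Ring E] [Algebra F E] (R : L →ₗ⁅F⁆ E)

theorem commute_lieHom_apply_z (a : L) : Commute (R a) (R z) :=
  hH.commute_map R.toLinearMap (fun i => R.commute_apply_of_lie_eq_zero (hH.lie_xz i))
    (fun i => R.commute_apply_of_lie_eq_zero (hH.lie_yz i)) (Commute.refl _) a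

theorem isWeylFamily {c : F} (hc0 : c ≠ 0) (hc : R z = algebraMap F E c) :
    IsWeylFamily (fun i => R (X i)) (fun i => c⁻¹ • R (Y i)) where
  commute_left i j := R.commute_apply_of_lie_eq_zero (hH.lie_xx i j)
  commute_right i j :=
    ((R.commute_apply_of_lie_eq_zero (hH.lie_yy i j)).smul_left _).smul_right _
  mul_sub_mul i j := by
    rw [mul_smul_comm, smul_mul_assoc, ← smul_sub, ← Ring.lie_def, ← R.map_lie, hH.lie_xy]
    split_ifs
    · rw [hc, Algebra.smul_def, ← map_mul, inv_mul_cancel₀ hc0, map_one]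
    · rw [map_zero, smul_zero]

end Algebra

section Representation

variable {V : Type*} [AddCommGroup V] [Module F V] (R : L →ₗ⁅F⁆ Module.End F V)
  {c : F} (hc0 : c ≠ 0) (hc : R z = algebraMap F _ c)

theorem exists_lieHom_apply_z_eq_algebraMap [IsAlgClosed F] [FiniteDimensional F V]
    (hinj : Injective R)
    (hirr : ∀ U : Submodule F V, (∀ a : L, ∀ v ∈ U, R a v ∈ U) → U = ⊥ ∨ U = ⊤) :
    ∃ c : F, c ≠ 0 ∧ R z = algebraMap F _ c := by
  obtain ⟨c, hc⟩ :=
    Module.End.exists_eq_algebraMap_of_forall_commute R hirr (hH.commute_lieHom_apply_z R)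
  refine ⟨c, ?_, hc⟩
  rintro rfl
  exact hH.z_ne_zero (hinj (by rw [hc, map_zero, map_zero]))

include hc0 hc

theorem exists_pow_eq_algebraMap [IsAlgClosed F] [FiniteDimensional F V] (p : ℕ) [CharP F p]
    (hirr : ∀ U : Submodule F V, (∀ a : L, ∀ v ∈ U, R a v ∈ U) → U = ⊥ ∨ U = ⊤) (i : Fin n) :
    ∃ γ : F, (c⁻¹ • R (Y i)) ^ p = algebraMap F _ γ := by
  have hW := hH.isWeylFamily R hc0 hc
  have hp : (p : Module.End F V) = 0 := by
    rw [← map_natCast (algebraMap F _), CharP.cast_eq_zero, map_zero]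
  refine Module.End.exists_eq_algebraMap_of_forall_commute R hirr <|
    hH.commute_map R.toLinearMap (fun j => hW.commute_pow hp j i) (fun j => ?_)
      (hc ▸ Algebra.commute_algebraMap_left _ _)
  change Commute (R (Y j)) _
  rw [← smul_inv_smul₀ hc0 (R (Y j))]
  exact ((hW.commute_right j i).pow_right p).smul_left c

theorem lieHom_apply_mem {μ : Fin n → F} {U : Submodule F V}
    (hA : ∀ i, ∀ x ∈ U, (R (X i) - algebraMap F _ (μ i)) x ∈ U)
    (hB : ∀ i, ∀ x ∈ U, (c⁻¹ • R (Y i)) x ∈ U) : ∀ a : L, ∀ x ∈ U, R a x ∈ U :=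
  hH.map_apply_mem R.toLinearMap
    (fun i x hx => by simpa using U.add_mem (hA i x hx) (U.smul_mem (μ i) hx))
    (fun i x hx => by simpa [smul_smul, hc0] using U.smul_mem c (hB i x hx))
    (fun x hx => by simpa [hc] using U.smul_mem c hx)

end Representation

end IsHeisenbergBasis

theorem heisenberg_faithful_irreducible_dim_eq_pow
    (F : Type*) [Field F] [IsAlgClosed F] (p : ℕ) [Fact p.Prime] [CharP F p]
    {n : ℕ} {L : Type*} [LieRing L] [LieAlgebra F L]
    (X Y : Fin n → L) (z : L) (hH : IsHeisenbergBasis F X Y z)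
    (V : Type*) [AddCommGroup V] [Module F V] [FiniteDimensional F V]
    (R : L →ₗ⁅F⁆ Module.End F V)
    (hinj : Function.Injective R)
    (hirr : ∀ U : Submodule F V, (∀ a : L, ∀ v ∈ U, R a v ∈ U) → U = ⊥ ∨ U = ⊤) :
    Module.finrank F V = p ^ n := by
  obtain ⟨c, hc0, hc⟩ := hH.exists_lieHom_apply_z_eq_algebraMap R hinj hirr
  have : Nontrivial V := (subsingleton_or_nontrivial V).resolve_left fun _ =>
    hH.z_ne_zero (hinj (Subsingleton.elim _ _))
  have hW := hH.isWeylFamily R hc0 hc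
  obtain ⟨v, hv0, μ, hμ⟩ := Module.End.exists_forall_apply_eq_smul _ hW.commute_left
  simpa using (hW.sub_algebraMap μ).finrank_eq_pow (fun i => by simp [hμ])
    (Fact.out : p.Prime).pos hv0 (hH.exists_pow_eq_algebraMap R hc0 hc p hirr)
    fun U hA hB => hirr U (hH.lieHom_apply_mem R hc0 hc hA hB)
end

section
/- Let F be a field of prime characteristic p, and let R: h(n) → gl(V) be a faithful finite-dimensional irreducible representation (F arbitrary). Then p^n divides dim V. -/
attribute [local instance 100] LieRing.ofAssociativeRing

open Module
open scoped TensorProduct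

section PowChar

variable {S : Type*} [Ring S] {a x c : S}

theorem pow_succ_mul_sub_mul_pow_succ (h : a * x - x * a = c) (hc : Commute a c) (k : ℕ) :
    a ^ (k + 1) * x - x * a ^ (k + 1) = (k + 1) • (c * a ^ k) := by
  induction k with
  | zero => simpa using h
  | succ k ih =>
    calc a ^ (k + 2) * x - x * a ^ (k + 2)
        = a * (a ^ (k + 1) * x - x * a ^ (k + 1)) + (a * x - x * a) * a ^ (k + 1) := by
          rw [pow_succ' a (k + 1)]; noncomm_ring
      _ = (k + 2) • (c * a ^ (k + 1)) := by
          rw [ih, h, mul_smul_comm, ← mul_assoc, hc.eq, mul_assoc, ← pow_succ', ← succ_nsmul]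

theorem commute_pow_char_of_mul_sub_mul (p : ℕ) [hp : Fact p.Prime] [CharP S p]
    (h : a * x - x * a = c) (hc : Commute a c) : Commute (a ^ p) x := by
  obtain ⟨k, rfl⟩ := Nat.exists_eq_succ_of_ne_zero hp.out.ne_zero
  rw [commute_iff_eq, ← sub_eq_zero, pow_succ_mul_sub_mul_pow_succ h hc k, nsmul_eq_mul,
    CharP.cast_eq_zero, zero_mul]

end PowChar

structure IsWeylFamily_s7 {A : Type*} [Ring A] {n : ℕ} (a b : Fin n → A) : Prop where
  commute : ∀ i j, Commute (a i) (a j)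
  mul_sub_mul : ∀ i j, a i * b j - b j * a i = if i = j then 1 else 0

namespace IsWeylFamily_s7

variable {A B : Type*} [Ring A] [Ring B] {n : ℕ} {a b : Fin n → A}

theorem map (h : IsWeylFamily_s7 a b) (f : A →+* B) : IsWeylFamily_s7 (f ∘ a) (f ∘ b) where
  commute i j := (h.commute i j).map f
  mul_sub_mul i j := by
    simp only [Function.comp_apply, ← map_mul, ← map_sub, h.mul_sub_mul, apply_ite f, map_one,
      map_zero]

theorem of_map {f : A →+* B} (hf : Function.Injective f) (h : IsWeylFamily_s7 (f ∘ a) (f ∘ b)) :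
    IsWeylFamily_s7 a b where
  commute i j := hf <| by simpa using (h.commute i j).eq
  mul_sub_mul i j := hf <| by simpa [apply_ite f] using h.mul_sub_mul i j

theorem comp (h : IsWeylFamily_s7 a b) {m : ℕ} {e : Fin m → Fin n} (he : Function.Injective e) :
    IsWeylFamily_s7 (a ∘ e) (b ∘ e) where
  commute i j := h.commute (e i) (e j)
  mul_sub_mul i j := by simpa [he.eq_iff] using h.mul_sub_mul (e i) (e j)

theorem commute_of_ne_s7 (h : IsWeylFamily_s7 a b) {i j : Fin n} (hij : i ≠ j) :
    Commute (a i) (b j) :=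
  sub_eq_zero.mp <| by simpa [hij] using h.mul_sub_mul i j

theorem sub_algebraMap_s7 {K : Type*} [CommRing K] [Algebra K A] (h : IsWeylFamily_s7 a b)
    (c : Fin n → K) : IsWeylFamily_s7 (fun i => a i - algebraMap K A (c i)) b where
  commute i j :=
    ((h.commute i j).sub_right (Algebra.commute_algebraMap_right _ _)).sub_left
      (Algebra.commute_algebraMap_left _ _)
  mul_sub_mul i j := by
    rw [sub_mul, mul_sub, Algebra.commutes (c i) (b j), ← h.mul_sub_mul i j]
    abel

end IsWeylFamily_s7

theorem Module.End.pow_apply_pow_apply_of_mul_sub_mul_eq_one {R M : Type*} [Semiring R]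
    [AddCommGroup M] [Module R M] {N B : Module.End R M} (hNB : N * B - B * N = 1) {w : M}
    (hw : N w = 0) (m k : ℕ) :
    (N ^ m) ((B ^ k) w) = k.descFactorial m • (B ^ (k - m)) w := by
  have hstep : ∀ v, N (B v) = B (N v) + v := fun v => by
    simpa [sub_eq_iff_eq_add, add_comm] using congr($hNB v)
  have hN : ∀ k : ℕ, N ((B ^ k) w) = k • (B ^ (k - 1)) w := by
    intro k
    induction k with
    | zero => simpa using hw
    | succ k ih =>
      rw [pow_succ', Module.End.mul_apply, hstep, ih, map_nsmul]
      cases k with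
      | zero => simp
      | succ k => simp [pow_succ', succ_nsmul]
  induction m generalizing k with
  | zero => simp
  | succ m ih =>
    rw [pow_succ', Module.End.mul_apply, ih, map_nsmul, hN, smul_smul, Nat.sub_sub,
      Nat.descFactorial_succ, mul_comm]

section Field

variable {K V : Type*} [Field K] [AddCommGroup V] [Module K V]

open LinearMap in
theorem Module.End.finrank_ker_pow_succ [FiniteDimensional K V] {N B : Module.End K V}
    (hNB : N * B - B * N = 1) {k : ℕ} (hk : (k.factorial : K) ≠ 0) :
    finrank K (ker (N ^ (k + 1))) = finrank K (ker (N ^ k)) + finrank K (ker N) := by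
  set f := (N ^ k).domRestrict (ker (N ^ (k + 1)))
  have hrange : range f = ker N := by
    apply le_antisymm
    · rintro _ ⟨⟨x, hx⟩, rfl⟩
      simpa [f, pow_succ'] using hx
    · intro w hw
      -- `N ^ k` sends `(k!)⁻¹ • B ^ k w` to `w`, and `N ^ (k + 1)` kills it
      refine ⟨⟨(k.factorial : K)⁻¹ • (B ^ k) w, ?_⟩, ?_⟩
      · simp [Module.End.pow_apply_pow_apply_of_mul_sub_mul_eq_one hNB hw]
      · simp [f, Module.End.pow_apply_pow_apply_of_mul_sub_mul_eq_one hNB hw,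
          Nat.descFactorial_self, ← Nat.cast_smul_eq_nsmul K, smul_smul, hk]
  have hker : finrank K (ker f) = finrank K (ker (N ^ k)) := by
    rw [ker_domRestrict]
    exact (Submodule.comapSubtypeEquivOfLe (pow_succ' N k ▸ ker_le_ker_comp (N ^ k) N)).finrank_eq
  rw [← finrank_range_add_finrank_ker f, hrange, hker, add_comm]

theorem Module.End.finrank_eq_mul_finrank_ker [FiniteDimensional K V] (p : ℕ) [Fact p.Prime]
    [CharP K p] {N B : Module.End K V} (hNB : N * B - B * N = 1) (hN : N ^ p = 0) :
    finrank K V = p * finrank K (LinearMap.ker N) := by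
  have hker : ∀ k ≤ p, finrank K (LinearMap.ker (N ^ k)) = k * finrank K (LinearMap.ker N) := by
    intro k hk
    induction k with
    | zero => simp [Module.End.one_eq_id]
    | succ k ih =>
      have hfac : (k.factorial : K) ≠ 0 := by
        rw [Ne, CharP.cast_eq_zero_iff K p, (Fact.out : p.Prime).dvd_factorial]
        omega
      rw [Module.End.finrank_ker_pow_succ hNB hfac, ih (by omega)]
      ring
  rw [← hker p le_rfl, hN, LinearMap.ker_zero, finrank_top]

def Module.End.restrictKer (N : Module.End K V) :
    Subalgebra.centralizer K {N} →+* Module.End K (LinearMap.ker N) where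
  toFun T := T.1.restrict fun v hv => by
    simp only [LinearMap.mem_ker] at hv ⊢
    rw [← Module.End.mul_apply, (Subalgebra.mem_centralizer_iff K).mp T.2 N rfl,
      Module.End.mul_apply, hv, map_zero]
  map_one' := rfl
  map_mul' _ _ := rfl
  map_zero' := rfl
  map_add' _ _ := rfl

theorem IsWeylFamily_s7.pow_dvd_finrank_of_pow_eq_zero [FiniteDimensional K V] (p : ℕ)
    [Fact p.Prime] [CharP K p] {n : ℕ} {N b : Fin n → Module.End K V} (h : IsWeylFamily_s7 N b)
    (hN : ∀ i, N i ^ p = 0) : p ^ n ∣ finrank K V := by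
  induction n generalizing V with
  | zero => simp
  | succ n ih =>
    set S := Subalgebra.centralizer K {N 0}
    have hNS (i : Fin n) : N i.succ ∈ S := by
      rw [Subalgebra.mem_centralizer_iff]
      rintro _ rfl
      exact (h.commute 0 i.succ).eq
    have hbS (i : Fin n) : b i.succ ∈ S := by
      rw [Subalgebra.mem_centralizer_iff]
      rintro _ rfl
      exact (h.commute_of_ne_s7 (Fin.succ_ne_zero i).symm).eq
    let N' : Fin n → S := fun i => ⟨N i.succ, hNS i⟩
    let b' : Fin n → S := fun i => ⟨b i.succ, hbS i⟩
    have hS : IsWeylFamily_s7 N' b' :=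
      IsWeylFamily_s7.of_map (f := (S.val : S →+* Module.End K V)) Subtype.val_injective
        (h.comp (Fin.succ_injective n))
    have hN' (i : Fin n) : N' i ^ p = 0 := Subtype.ext (hN i.succ)
    have hW := ih (hS.map (N 0).restrictKer) fun i => by simp [← map_pow, hN']
    rw [pow_succ', Module.End.finrank_eq_mul_finrank_ker p (h.mul_sub_mul 0 0) (hN 0)]
    exact mul_dvd_mul_left p hW

theorem IsWeylFamily_s7.pow_dvd_finrank [FiniteDimensional K V] (p : ℕ) [Fact p.Prime] [CharP K p]
    {n : ℕ} {a b : Fin n → Module.End K V} (h : IsWeylFamily_s7 a b)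
    (ha : ∀ i, a i ^ p ∈ Set.range (algebraMap K (Module.End K V))) :
    p ^ n ∣ finrank K V := by
  rcases subsingleton_or_nontrivial V with hV | hV
  · simp [finrank_zero_of_subsingleton]
  have : Nontrivial (AlgebraicClosure K ⊗[K] V) :=
    Module.nontrivial_of_finrank_pos (R := AlgebraicClosure K)
      (by rw [finrank_baseChange]; exact finrank_pos)
  have : CharP (Module.End (AlgebraicClosure K) (AlgebraicClosure K ⊗[K] V)) p :=
    charP_of_injective_algebraMap (algebraMap (AlgebraicClosure K) _).injective p
  let φ := Module.End.baseChangeHom K (AlgebraicClosure K) V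
  choose α hα using ha
  choose γ hγ using fun i =>
    IsAlgClosed.exists_pow_nat_eq (algebraMap K (AlgebraicClosure K) (α i))
      (Fact.out : p.Prime).pos
  rw [← finrank_baseChange (R := AlgebraicClosure K)]
  refine ((h.map (φ : Module.End K V →+* _)).sub_algebraMap_s7 γ).pow_dvd_finrank_of_pow_eq_zero p
    fun i => ?_
  have hcomm := Algebra.commute_algebraMap_right (γ i) (φ (a i))
  rw [Function.comp_apply, sub_pow_char_of_commute p hcomm, RingHom.coe_coe, ← map_pow, ← hα i,
    AlgHom.commutes, ← map_pow, hγ, ← IsScalarTower.algebraMap_apply, sub_self]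

def Subalgebra.centralizerToEnd (E : Subalgebra K (Module.End K V)) :
    Subalgebra.centralizer K (E : Set (Module.End K V)) →+* Module.End E V where
  toFun T :=
    { toFun := T.1
      map_add' := T.1.map_add
      map_smul' e v := congr($((Subalgebra.mem_centralizer_iff K).mp T.2 e e.2) v).symm }
  map_one' := rfl
  map_mul' _ _ := rfl
  map_zero' := rfl
  map_add' _ _ := rfl

theorem IsWeylFamily_s7.pow_dvd_finrank_of_isField [FiniteDimensional K V] (p : ℕ) [Fact p.Prime]
    [CharP K p] {E : Subalgebra K (Module.End K V)} (hE : IsField E) {n : ℕ}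
    {a b : Fin n → Module.End K V} (h : IsWeylFamily_s7 a b)
    (ha : ∀ i, a i ∈ Subalgebra.centralizer K (E : Set (Module.End K V)))
    (hb : ∀ i, b i ∈ Subalgebra.centralizer K (E : Set (Module.End K V)))
    (hpow : ∀ i, a i ^ p ∈ E) :
    p ^ n ∣ finrank K V := by
  let := hE.toField
  have : FiniteDimensional E V := FiniteDimensional.right K E V
  have : CharP E p := charP_of_injective_algebraMap (algebraMap K E).injective p
  set C := Subalgebra.centralizer K (E : Set (Module.End K V))
  let a' : Fin n → C := fun i => ⟨a i, ha i⟩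
  let b' : Fin n → C := fun i => ⟨b i, hb i⟩
  have h' : IsWeylFamily_s7 a' b' :=
    IsWeylFamily_s7.of_map (f := (C.val : C →+* Module.End K V)) Subtype.val_injective h
  refine ((h'.map E.centralizerToEnd).pow_dvd_finrank p fun i => ⟨⟨_, hpow i⟩, ?_⟩).trans
    (Dvd.intro_left _ (Module.finrank_mul_finrank K E V))
  rw [Function.comp_apply, ← map_pow]
  rfl

variable {ι : Type*} {ρ : ι → Module.End K V}

theorem Module.End.bijective_of_commute
    (hρ : ∀ U : Submodule K V, (∀ i, ∀ v ∈ U, ρ i v ∈ U) → U = ⊥ ∨ U = ⊤)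
    {T : Module.End K V} (hT : ∀ i, Commute (ρ i) T) (hT0 : T ≠ 0) : Function.Bijective T := by
  refine ⟨LinearMap.ker_eq_bot.mp ?_, LinearMap.range_eq_top.mp ?_⟩
  · refine (hρ _ fun i v hv => ?_).resolve_right fun h => hT0 (LinearMap.ker_eq_top.mp h)
    rw [LinearMap.mem_ker] at hv ⊢
    rw [← Module.End.mul_apply, ← (hT i).eq, Module.End.mul_apply, hv, map_zero]
  · refine (hρ _ fun i v hv => ?_).resolve_left fun h => hT0 (LinearMap.range_eq_bot.mp h)
    obtain ⟨w, rfl⟩ := hv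
    exact ⟨ρ i w, by rw [← Module.End.mul_apply, ← (hT i).eq, Module.End.mul_apply]⟩

theorem isField_centralizer_union_centralizer [Nontrivial V]
    (hρ : ∀ U : Submodule K V, (∀ i, ∀ v ∈ U, ρ i v ∈ U) → U = ⊥ ∨ U = ⊤) :
    IsField (Subalgebra.centralizer K (Set.range ρ ∪ (Set.range ρ).centralizer)) where
  exists_pair_ne := ⟨0, 1, fun h => zero_ne_one congr(Subtype.val $h)⟩
  mul_comm x y := Subtype.ext <|
    ((Set.centralizer_union.subset x.2).2 y (Set.centralizer_union.subset y.2).1).symm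
  mul_inv_cancel {x} hx := by
    have hxρ := (Set.centralizer_union.subset x.2).1
    obtain ⟨u, hu⟩ := (Module.End.isUnit_iff _).mpr <| Module.End.bijective_of_commute hρ
      (fun i => hxρ _ ⟨i, rfl⟩) fun h => hx (Subtype.ext h)
    refine ⟨⟨↑u⁻¹, fun g hg => ?_⟩, Subtype.ext (by simp [← hu])⟩
    exact (Commute.units_inv_right (hu ▸ x.2 g hg :)).eq

end Field

section Heisenberg

variable {F L A : Type*} [Field F] [LieRing L] [LieAlgebra F L] [Ring A] [Algebra F A]
  (R : L →ₗ⁅F⁆ A)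

theorem LieHom.mul_sub_mul_eq_map_lie (u w : L) : R u * R w - R w * R u = R ⁅u, w⁆ := by
  rw [LieHom.map_lie, Ring.lie_def]

theorem LieHom.commute_of_lie_eq_zero {u w : L} (h : ⁅u, w⁆ = 0) : Commute (R u) (R w) :=
  sub_eq_zero.mp <| by rw [R.mul_sub_mul_eq_map_lie, h, map_zero]

namespace IsHeisenbergBasis

variable {R} {n : ℕ} {X Y : Fin n → L} {z : L}

theorem ne_zero (hH : IsHeisenbergBasis F X Y z) : z ≠ 0 := by
  simpa using hH.indep.ne_zero (Sum.inr (Sum.inr ()))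

theorem commute_of_commute_basis (hH : IsHeisenbergBasis F X Y z) (f : L →ₗ[F] A) {T : A}
    (hX : ∀ i, Commute (f (X i)) T) (hY : ∀ i, Commute (f (Y i)) T) (hz : Commute (f z) T)
    (l : L) : Commute (f l) T := by
  have hl : l ∈ Submodule.span F (Set.range (Sum.elim X (Sum.elim Y fun _ : Unit => z))) :=
    hH.span ▸ Submodule.mem_top
  induction hl using Submodule.span_induction with
  | mem x hx =>
    obtain ⟨i | i | _, rfl⟩ := hx
    exacts [hX i, hY i, hz]
  | zero => simp
  | add x y _ _ hx hy => simpa using hx.add_left hy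
  | smul t x _ hx => simpa using hx.smul_left t

theorem commute_lieHom_z (hH : IsHeisenbergBasis F X Y z) (l : L) : Commute (R l) (R z) :=
  hH.commute_of_commute_basis R.toLinearMap
    (fun i => R.commute_of_lie_eq_zero (hH.lie_xz i))
    (fun i => R.commute_of_lie_eq_zero (hH.lie_yz i)) (Commute.refl _) l

theorem lieHom_mul_sub_mul_x_y (hH : IsHeisenbergBasis F X Y z) (i j : Fin n) :
    R (X i) * R (Y j) - R (Y j) * R (X i) = if i = j then R z else 0 := by
  rw [R.mul_sub_mul_eq_map_lie, hH.lie_xy, apply_ite R, map_zero]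

theorem commute_lieHom_pow_char (hH : IsHeisenbergBasis F X Y z) (p : ℕ) [Fact p.Prime]
    [CharP A p] (i : Fin n) (l : L) : Commute (R l) (R (X i) ^ p) := by
  refine hH.commute_of_commute_basis R.toLinearMap (fun j => ?_) (fun j => ?_) ?_ l
  · exact ((R.commute_of_lie_eq_zero (hH.lie_xx i j)).pow_left p).symm
  · refine (commute_pow_char_of_mul_sub_mul p (hH.lieHom_mul_sub_mul_x_y i j) ?_).symm
    split_ifs
    exacts [hH.commute_lieHom_z (X i), Commute.zero_right _]
  · exact ((hH.commute_lieHom_z (X i)).pow_left p).symm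

theorem isWeylFamily_lieHom (hH : IsHeisenbergBasis F X Y z) (u : Aˣ) (hu : (u : A) = R z) :
    IsWeylFamily_s7 (fun i => R (X i)) (fun j => ↑u⁻¹ * R (Y j)) where
  commute i j := R.commute_of_lie_eq_zero (hH.lie_xx i j)
  mul_sub_mul i j := by
    have hXu : Commute (R (X i)) ↑u⁻¹ := (hu ▸ hH.commute_lieHom_z (X i)).units_inv_right
    rw [← mul_assoc, hXu.eq, mul_assoc, mul_assoc, ← mul_sub, hH.lieHom_mul_sub_mul_x_y, mul_ite,
      ← hu, Units.inv_mul, mul_zero]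

end IsHeisenbergBasis

end Heisenberg

theorem heisenberg_faithful_irreducible_pow_dvd_dim
    (F : Type*) [Field F] (p : ℕ) [Fact p.Prime] [CharP F p]
    {n : ℕ} {L : Type*} [LieRing L] [LieAlgebra F L]
    (X Y : Fin n → L) (z : L) (hH : IsHeisenbergBasis F X Y z)
    (V : Type*) [AddCommGroup V] [Module F V] [FiniteDimensional F V]
    (R : L →ₗ⁅F⁆ Module.End F V)
    (hinj : Function.Injective R)
    (hirr : ∀ U : Submodule F V, (∀ a : L, ∀ v ∈ U, R a v ∈ U) → U = ⊥ ∨ U = ⊤) :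
    p ^ n ∣ Module.finrank F V := by
  have hRz : R z ≠ 0 := fun h => hH.ne_zero (hinj (h.trans R.map_zero.symm))
  have : Nontrivial V := by
    by_contra! hV
    exact hRz (Subsingleton.elim _ _)
  have : CharP (Module.End F V) p := charP_of_injective_algebraMap (algebraMap F _).injective p
  set E := Subalgebra.centralizer F (Set.range R ∪ (Set.range R).centralizer)
  have hRE (l : L) : R l ∈ Subalgebra.centralizer F (E : Set (Module.End F V)) :=
    fun e he => ((Set.centralizer_union.subset he).1 (R l) ⟨l, rfl⟩).symm
  obtain ⟨u, hu⟩ : IsUnit (R z) := (Module.End.isUnit_iff _).mpr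
    (Module.End.bijective_of_commute hirr hH.commute_lieHom_z hRz)
  refine (hH.isWeylFamily_lieHom u hu).pow_dvd_finrank_of_isField p
    (isField_centralizer_union_centralizer hirr) (fun i => hRE (X i)) (fun j => ?_) (fun i => ?_)
  · refine mul_mem (fun e he => ?_) (hRE (Y j))
    exact (Commute.units_inv_right (hu ▸ (hRE z e he :))).eq
  · rintro g (⟨l, rfl⟩ | hg)
    · exact (hH.commute_lieHom_pow_char p i l).eq
    · exact (Commute.pow_left (hg (R (X i)) ⟨X i, rfl⟩) p).eq.symm
end

section
/- Let F have prime characteristic p > 2, α ∈ F nonzero, and let D ∈ gl(p,F) be the matrix with entries D_{i,i+1} = i·α for 1 ≤ i ≤ p-1, D_{i+1,i} = 1 for 1 ≤ i ≤ p-1, and all other entries 0. Then D is nilpotent. -/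
private lemma sumIf {F : Type*} [NonAssocSemiring F] {p : ℕ} (f : Fin p → F) (t : ℕ) :
    (∑ k : Fin p, if (k : ℕ) = t then f k else 0) = if ht : t < p then f ⟨t, ht⟩ else 0 := by
  split_ifs with ht
  · rw [Finset.sum_eq_single (⟨t, ht⟩ : Fin p)]
    · simp
    · intro k _ hk
      exact if_neg (by simpa [Fin.ext_iff] using hk)
    · exact fun h => absurd (Finset.mem_univ _) h
  · exact Finset.sum_eq_zero fun k _ => if_neg (by have := k.isLt; omega)

theorem tridiagonal_matrix_nilpotent
    (F : Type*) [Field F] (p : ℕ) [Fact p.Prime] [CharP F p] (hp : 2 < p)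
    (α : F) (hα : α ≠ 0)
    (D : Matrix (Fin p) (Fin p) F)
    (hD : D = Matrix.of fun i j : Fin p =>
      if (j : ℕ) = (i : ℕ) + 1 then ((i : ℕ) + 1 : F) * α
      else if (i : ℕ) = (j : ℕ) + 1 then 1 else 0) :
    IsNilpotent D := by
  have hp0 : ((p : ℕ) : F) = 0 := CharP.cast_eq_zero F p
  have castpred : ∀ n : ℕ, n ≠ 0 → ((n - 1 : ℕ) : F) + 1 = (n : F) := by
    intro n hn
    rw [Nat.cast_sub (by omega), Nat.cast_one]; ring
  have castne : ∀ n : ℕ, 0 < n → n < p → ((n : ℕ) : F) ≠ 0 := by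
    intro n h1 h2 h
    rw [CharP.cast_eq_zero_iff F p] at h
    exact absurd (Nat.le_of_dvd h1 h) (by omega)
  have hq : ((p - 1 : ℕ) : F) = -1 := by
    have h := castpred p (by omega)
    rw [hp0] at h
    linear_combination h
  -- A : subdiagonal shift, B : superdiagonal part
  set A : Matrix (Fin p) (Fin p) F :=
    Matrix.of (fun i j : Fin p => if (i : ℕ) = (j : ℕ) + 1 then 1 else 0) with hA
  set B : Matrix (Fin p) (Fin p) F :=
    Matrix.of (fun i j : Fin p => if (j : ℕ) = (i : ℕ) + 1 then ((i : ℕ) + 1 : F) * α else 0)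
    with hB
  have hD' : D = A + B := by
    rw [hD]; ext i j
    simp only [hA, hB, Matrix.add_apply, Matrix.of_apply]
    split_ifs <;> first | omega | ring
  -- extension of a matrix to an ℕ-indexed function, 0 outside the range
  set ex : Matrix (Fin p) (Fin p) F → ℕ → ℕ → F :=
    fun N i j => if h : i < p ∧ j < p then N ⟨i, h.1⟩ ⟨j, h.2⟩ else 0 with hex
  have exd : ∀ (N : Matrix (Fin p) (Fin p) F) (i j : ℕ),
      ex N i j = if h : i < p ∧ j < p then N ⟨i, h.1⟩ ⟨j, h.2⟩ else 0 := fun _ _ _ => rfl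
  have exv : ∀ (N : Matrix (Fin p) (Fin p) F) (i j : Fin p), ex N (i : ℕ) (j : ℕ) = N i j := by
    intro N i j
    rw [exd, dif_pos ⟨i.isLt, j.isLt⟩]
  have exz : ∀ (N : Matrix (Fin p) (Fin p) F) (i j : ℕ), p ≤ i ∨ p ≤ j → ex N i j = 0 := by
    intro N i j h
    rw [exd, dif_neg (by omega)]
  -- the four product formulas
  have mulA : ∀ (N : Matrix (Fin p) (Fin p) F) (i j : Fin p),
      (N * A) i j = ex N (i : ℕ) ((j : ℕ) + 1) := by
    intro N i j
    rw [Matrix.mul_apply]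
    have h1 : ∀ k : Fin p, N i k * A k j = if (k : ℕ) = (j : ℕ) + 1 then N i k else 0 := by
      intro k
      simp only [hA, Matrix.of_apply, mul_ite, mul_one, mul_zero]
    rw [Finset.sum_congr rfl (fun k _ => h1 k), sumIf (fun k => N i k) ((j : ℕ) + 1), exd]
    by_cases h : (j : ℕ) + 1 < p
    · rw [dif_pos h, dif_pos ⟨i.isLt, h⟩]
    · rw [dif_neg h, dif_neg (fun hc => h hc.2)]
  have Amul : ∀ (N : Matrix (Fin p) (Fin p) F) (i j : Fin p),
      (A * N) i j = if (i : ℕ) = 0 then 0 else ex N ((i : ℕ) - 1) (j : ℕ) := by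
    intro N i j
    rw [Matrix.mul_apply]
    have h1 : ∀ k : Fin p, A i k * N k j =
        if (k : ℕ) = (i : ℕ) - 1 ∧ (i : ℕ) ≠ 0 then N k j else 0 := by
      intro k
      simp only [hA, Matrix.of_apply, ite_mul, one_mul, zero_mul]
      exact if_congr (by omega) rfl rfl
    rw [Finset.sum_congr rfl (fun k _ => h1 k)]
    by_cases hi : (i : ℕ) = 0
    · simp [hi]
    · rw [if_neg hi, Finset.sum_congr rfl (fun k _ => if_congr (and_iff_left hi) rfl rfl),
        sumIf (fun k => N k j) ((i : ℕ) - 1), exd]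
      have hlt : (i : ℕ) - 1 < p := by have := i.isLt; omega
      rw [dif_pos hlt, dif_pos ⟨hlt, j.isLt⟩]
  have mulB : ∀ (N : Matrix (Fin p) (Fin p) F) (i j : Fin p),
      (N * B) i j = ((j : ℕ) : F) * α * ex N (i : ℕ) ((j : ℕ) - 1) := by
    intro N i j
    rw [Matrix.mul_apply]
    have h1 : ∀ k : Fin p, N i k * B k j =
        if (k : ℕ) = (j : ℕ) - 1 ∧ (j : ℕ) ≠ 0 then (((k : ℕ) : F) + 1) * α * N i k else 0 := by
      intro k
      simp only [hB, Matrix.of_apply, mul_ite, mul_zero]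
      exact if_congr (by omega) (by ring) rfl
    rw [Finset.sum_congr rfl (fun k _ => h1 k)]
    by_cases hj : (j : ℕ) = 0
    · simp [hj]
    · simp only [hj, ne_eq, not_false_eq_true, and_true]
      rw [sumIf (fun k => (((k : ℕ) : F) + 1) * α * N i k) ((j : ℕ) - 1)]
      have hlt : (j : ℕ) - 1 < p := by have := j.isLt; omega
      rw [dif_pos hlt, exd, dif_pos ⟨i.isLt, hlt⟩]
      rw [castpred (j : ℕ) hj]
  have Bmul : ∀ (N : Matrix (Fin p) (Fin p) F) (i j : Fin p),
      (B * N) i j = (((i : ℕ) : F) + 1) * α * ex N ((i : ℕ) + 1) (j : ℕ) := by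
    intro N i j
    rw [Matrix.mul_apply]
    have h1 : ∀ k : Fin p, B i k * N k j =
        if (k : ℕ) = (i : ℕ) + 1 then (((i : ℕ) : F) + 1) * α * N k j else 0 := by
      intro k
      simp only [hB, Matrix.of_apply, ite_mul, zero_mul]
    rw [Finset.sum_congr rfl (fun k _ => h1 k),
      sumIf (fun k => (((i : ℕ) : F) + 1) * α * N k j) ((i : ℕ) + 1), exd]
    by_cases h : (i : ℕ) + 1 < p
    · rw [dif_pos h, dif_pos ⟨h, j.isLt⟩]
    · rw [dif_neg h, dif_neg (fun hc => h hc.1), mul_zero]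
  -- entries of B, as an ℕ-indexed function
  have exB : ∀ a b : ℕ, a < p → ex B a b = if b = a + 1 ∧ b < p then ((a : F) + 1) * α else 0 := by
    intro a b ha
    rw [exd]
    by_cases hb : b < p
    · rw [dif_pos ⟨ha, hb⟩]
      simp only [hB, Matrix.of_apply]
      exact if_congr (by omega) rfl rfl
    · rw [dif_neg (by omega), if_neg (by omega)]
  -- the key commutator relation [B, A] = α • 1
  have hBA : B * A = A * B + α • (1 : Matrix (Fin p) (Fin p) F) := by
    ext i j
    have hi := i.isLt; have hj := j.isLt
    rw [Matrix.add_apply, mulA B i j, Amul B i j, Matrix.smul_apply, Matrix.one_apply,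
      exB (i : ℕ) ((j : ℕ) + 1) hi, smul_eq_mul, mul_ite, mul_one, mul_zero]
    by_cases h0 : (i : ℕ) = 0
    · rw [if_pos h0]
      split_ifs <;> first | omega | ring1 | (rw [h0]; norm_num)
    · rw [if_neg h0, exB ((i : ℕ) - 1) (j : ℕ) (by omega), castpred (i : ℕ) h0]
      split_ifs <;>
        first | omega | ring1 | (rw [show (i : ℕ) = p - 1 from by omega, hq]; ring)
  have hDA : D * A = A * D + α • (1 : Matrix (Fin p) (Fin p) F) := by
    rw [hD', add_mul, mul_add, hBA]; abel
  -- the key power relation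
  have key : ∀ n : ℕ, D ^ (n + 1) * A = A * D ^ (n + 1) + ((((n : ℕ) : F) + 1) * α) • D ^ n := by
    intro n
    induction n with
    | zero => simpa using hDA
    | succ n ih =>
      have e1 : D ^ (n + 1 + 1) * A = D * (D ^ (n + 1) * A) := by
        rw [← mul_assoc, ← pow_succ']
      rw [e1, ih, mul_add, mul_smul_comm, ← mul_assoc, hDA, add_mul, smul_mul_assoc, one_mul,
        mul_assoc, ← pow_succ', ← pow_succ', add_assoc, ← add_smul]
      congr 2
      push_cast; ring
  have hMA : D ^ p * A = A * D ^ p := by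
    have h := key (p - 1)
    rw [show p - 1 + 1 = p from by omega] at h
    rw [h, show (((p - 1 : ℕ) : F) + 1) * α = 0 from by rw [hq]; ring, zero_smul, add_zero]
  have hDcomm : D ^ p * D = D * D ^ p := ((Commute.refl D).pow_left p).eq
  have hMB : D ^ p * B = B * D ^ p := by
    have hBDA : B = D - A := by rw [hD']; abel
    rw [hBDA, mul_sub, sub_mul, hMA, hDcomm]
  set M := D ^ p with hM
  -- pointwise commutation relations
  have R1 : ∀ i j : ℕ, i < p → j < p →
      ex M i (j + 1) = if i = 0 then 0 else ex M (i - 1) j := by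
    intro i j hi hj
    exact ((mulA M ⟨i, hi⟩ ⟨j, hj⟩).symm.trans (by rw [hMA])).trans (Amul M ⟨i, hi⟩ ⟨j, hj⟩)
  have R2 : ∀ i j : ℕ, i < p → j < p →
      ((j : ℕ) : F) * α * ex M i (j - 1) = (((i : ℕ) : F) + 1) * α * ex M (i + 1) j := by
    intro i j hi hj
    exact ((mulB M ⟨i, hi⟩ ⟨j, hj⟩).symm.trans (by rw [hMB])).trans (Bmul M ⟨i, hi⟩ ⟨j, hj⟩)
  -- above the diagonal M vanishes
  have upper : ∀ n : ℕ, ∀ i j : ℕ, i = n → i < j → ex M i j = 0 := by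
    intro n
    induction n with
    | zero =>
      intro i j hi hij
      by_cases hjp : j < p
      · have h := R1 0 (j - 1) (by omega) (by omega)
        rw [show j - 1 + 1 = j from by omega, if_pos rfl] at h
        rw [hi]; exact h
      · exact exz M i j (by omega)
    | succ n ih =>
      intro i j hi hij
      by_cases hjp : j < p
      · have h := R1 i (j - 1) (by omega) (by omega)
        rw [show j - 1 + 1 = j from by omega, if_neg (by omega)] at h
        rw [h]; exact ih (i - 1) (j - 1) (by omega) (by omega)
      · exact exz M i j (by omega)
  -- M is constant on the diagonal
  have diag : ∀ n : ℕ, n < p → ex M n n = ex M 0 0 := by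
    intro n
    induction n with
    | zero => intro _; rfl
    | succ n ih =>
      intro hn
      have h := R1 (n + 1) n (by omega) (by omega)
      rw [if_neg (by omega)] at h
      rw [h, Nat.add_sub_cancel]
      exact ih (by omega)
  -- below the diagonal M vanishes
  have lower : ∀ m : ℕ, ∀ i j : ℕ, j = m → j < i → ex M i j = 0 := by
    intro m
    induction m with
    | zero =>
      intro i j hj hij
      by_cases hip : i < p
      · subst hj
        have h := R2 (i - 1) 0 (by omega) (by omega)
        rw [show (i - 1) + 1 = i from by omega] at h
        simp only [Nat.cast_zero, zero_mul] at h
        have hcf : ((((i : ℕ) - 1 : ℕ) : F) + 1) * α ≠ 0 := by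
          rw [castpred i (by omega)]
          exact mul_ne_zero (castne i (by omega) hip) hα
        exact (mul_eq_zero.mp h.symm).resolve_left hcf
      · exact exz M i j (by omega)
    | succ m ih =>
      intro i j hj hij
      by_cases hip : i < p
      · subst hj
        have h := R2 (i - 1) (m + 1) (by omega) (by omega)
        rw [show (i - 1) + 1 = i from by omega, Nat.add_sub_cancel,
          ih (i - 1) m rfl (by omega), mul_zero] at h
        have hcf : ((((i : ℕ) - 1 : ℕ) : F) + 1) * α ≠ 0 := by
          rw [castpred i (by omega)]
          exact mul_ne_zero (castne i (by omega) hip) hα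
        exact (mul_eq_zero.mp h.symm).resolve_left hcf
      · exact exz M i j (by omega)
  -- hence M = c • 1
  set c := ex M 0 0 with hc
  have hMc : M = c • (1 : Matrix (Fin p) (Fin p) F) := by
    ext i j
    rw [Matrix.smul_apply, Matrix.one_apply, ← exv M i j]
    rcases lt_trichotomy (i : ℕ) (j : ℕ) with h | h | h
    · rw [upper (i : ℕ) (i : ℕ) (j : ℕ) rfl h, if_neg (by simp [Fin.ext_iff]; omega), smul_zero]
    · rw [if_pos (Fin.ext h), smul_eq_mul, mul_one, ← h]
      exact diag (i : ℕ) i.isLt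
    · rw [lower (j : ℕ) (i : ℕ) (j : ℕ) rfl h, if_neg (by simp [Fin.ext_iff]; omega), smul_zero]
  have hDp : D ^ p = c • (1 : Matrix (Fin p) (Fin p) F) := by rw [← hM]; exact hMc
  -- the sign argument: D is similar to -D
  have hodd : Odd p := (Fact.out : p.Prime).odd_of_ne_two (by omega)
  set S : Matrix (Fin p) (Fin p) F := Matrix.diagonal (fun i : Fin p => (-1 : F) ^ (i : ℕ))
    with hS
  have hSD : S * D = -(D * S) := by
    ext i j
    rw [Matrix.neg_apply, hS, Matrix.diagonal_mul, Matrix.mul_diagonal, hD]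
    simp only [Matrix.of_apply]
    split_ifs with h1 h2
    · rw [h1, pow_succ]; ring
    · rw [h2, pow_succ]; ring
    · ring
  have hSDn : ∀ n : ℕ, S * D ^ n = ((-1 : F) ^ n) • (D ^ n * S) := by
    intro n
    induction n with
    | zero => simp
    | succ n ih =>
      rw [pow_succ, ← mul_assoc, ih, smul_mul_assoc, mul_assoc, hSD, mul_neg, pow_succ,
        mul_neg_one, smul_neg, neg_smul, ← mul_assoc]
  have hfin : c = 0 := by
    have h := hSDn p
    rw [hDp, hodd.neg_one_pow] at h
    simp only [mul_smul_comm, mul_one, smul_mul_assoc, one_mul, neg_smul, one_smul] at h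
    -- h : c • S = -(c • S)
    have he := congrFun (congrFun h ⟨0, by omega⟩) ⟨0, by omega⟩
    simp only [Matrix.smul_apply, Matrix.neg_apply, hS, Matrix.diagonal_apply_eq,
      pow_zero, smul_eq_mul, mul_one] at he
    have h2 : (2 : F) ≠ 0 := by
      have := castne 2 (by omega) (by omega)
      simpa using this
    have h3 : (2 : F) * c = 0 := by linear_combination he
    exact (mul_eq_zero.mp h3).resolve_left h2
  exact ⟨p, by rw [hDp, hfin, zero_smul]⟩
end

section
/- Let K = F[α] be a field extension of F generated by a single element α, let g be a Lie algebra over F with extension g_K = g ⊗_F K, and let R: g_K → gl(V) be an irreducible representation on a K-vector space V. If the scalar operator α·I lies in the associative F-subalgebra of End(V) generated by R(g), then V is irreducible as a g-module (over F). -/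
/-!
A `g`-stable `F`-subspace `U` is stable under the `F`-algebra generated by `R(g)`, hence under
`α`, hence under `K = F[α]`. So `U` is a `K`-subspace, stable under `g_K` because `g` spans
`g_K` over `K`, and irreducibility over `K` applies.
-/

open scoped TensorProduct

attribute [local instance 100] LieRing.ofAssociativeRing

section Stability

variable {F K V : Type*} [CommSemiring F] [AddCommGroup V]

theorem AddSubgroup.smul_mem_of_mem_adjoin [Semiring K] [Algebra F K] [Module K V]
    {U : AddSubgroup V} (hU : ∀ c : F, ∀ v ∈ U, algebraMap F K c • v ∈ U)
    {s : Set K} (hs : ∀ k ∈ s, ∀ v ∈ U, k • v ∈ U) {k : K} (hk : k ∈ Algebra.adjoin F s) :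
    ∀ v ∈ U, k • v ∈ U :=
  let stabilizer : Subalgebra F K :=
    { carrier := {k | ∀ v ∈ U, k • v ∈ U}
      mul_mem' := fun {a b} ha hb v hv => (mul_smul a b v).symm ▸ ha _ (hb v hv)
      add_mem' := fun {a b} ha hb v hv => (add_smul a b v).symm ▸ U.add_mem (ha v hv) (hb v hv)
      algebraMap_mem' := hU }
  Algebra.adjoin_le (S := stabilizer) hs hk

theorem AddSubgroup.apply_mem_of_mem_span_closure [Semiring K] [Algebra F K] [Module K V]
    [Module F (Module.End K V)]
    (hsmul : ∀ (c : F) (f : Module.End K V) (v : V), (c • f) v = algebraMap F K c • f v)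
    {U : AddSubgroup V} (hU : ∀ c : F, ∀ v ∈ U, algebraMap F K c • v ∈ U)
    {S : Set (Module.End K V)} (hS : ∀ f ∈ S, ∀ v ∈ U, f v ∈ U) {f : Module.End K V}
    (hf : f ∈ Submodule.span F (Submonoid.closure S : Set (Module.End K V))) :
    ∀ v ∈ U, f v ∈ U :=
  let stabilizer : Submodule F (Module.End K V) :=
    { carrier := {f | ∀ v ∈ U, f v ∈ U}
      add_mem' := fun ha hb v hv => U.add_mem (ha v hv) (hb v hv)
      zero_mem' := fun _ _ => U.zero_mem
      smul_mem' := fun c f hf v hv => (hsmul c f v).symm ▸ hU c _ (hf v hv) }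
  let stabilizerMonoid : Submonoid (Module.End K V) :=
    { carrier := stabilizer
      mul_mem' := fun ha hb v hv => ha _ (hb v hv)
      one_mem' := fun _ hv => hv }
  have hclosure : Submonoid.closure S ≤ stabilizerMonoid := Submonoid.closure_le.mpr hS
  Submodule.span_le (p := stabilizer) |>.mpr hclosure hf

theorem Submodule.mem_compatibleMaps_of_one_tmul [CommSemiring K] [Algebra F K] [Module K V]
    {M : Type*} [AddCommMonoid M] [Module F M]
    (R : K ⊗[F] M →ₗ[K] Module.End K V) (U : Submodule K V)
    (hU : ∀ m : M, R (1 ⊗ₜ m) ∈ U.compatibleMaps U) (x : K ⊗[F] M) :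
    R x ∈ U.compatibleMaps U := by
  induction x using TensorProduct.induction_on with
  | zero => simp
  | tmul k m =>
    rw [← mul_one k, ← smul_eq_mul, ← TensorProduct.smul_tmul', map_smul]
    exact smul_mem _ k (hU m)
  | add x y hx hy => rw [map_add]; exact add_mem hx hy

end Stability

theorem irreducible_of_restriction_of_scalar_in_image_algebra
    (F K : Type) [Field F] [Field K] [Algebra F K]
    (α : K) (hgen : Algebra.adjoin F ({α} : Set K) = ⊤)
    (g : Type) [LieRing g] [LieAlgebra F g]
    (V : Type) [AddCommGroup V] [Module K V]
    (R : (K ⊗[F] g) →ₗ⁅K⁆ Module.End K V)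
    (hirr : ∀ U : Submodule K V, (∀ a : K ⊗[F] g, ∀ v ∈ U, R a v ∈ U) → U = ⊥ ∨ U = ⊤)
    -- condition (C): `α • I` lies in the associative `F`-subalgebra of `End V`
    -- generated by `R(g)` (the `F`-span of the multiplicative closure of `R(g)`)
    (hC : letI : Module F (Module.End K V) := Module.compHom _ (algebraMap F K)
      α • (1 : Module.End K V) ∈
        Submodule.span F
          ((Submonoid.closure (Set.range fun a : g => R ((1 : K) ⊗ₜ[F] a)) :
            Submonoid (Module.End K V)) : Set (Module.End K V))) :
    ∀ U : AddSubgroup V,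
      (∀ c : F, ∀ v ∈ U, algebraMap F K c • v ∈ U) →
      (∀ a : g, ∀ v ∈ U, R ((1 : K) ⊗ₜ[F] a) v ∈ U) →
      U = ⊥ ∨ U = ⊤ := by
  intro U hF hg
  let _ : Module F (Module.End K V) := Module.compHom _ (algebraMap F K)
  have hα : ∀ v ∈ U, α • v ∈ U := by
    simpa using U.apply_mem_of_mem_span_closure (fun _ _ _ => rfl) hF
      (by rintro _ ⟨a, rfl⟩; exact hg a) hC
  have hK (k : K) : ∀ v ∈ U, k • v ∈ U :=
    U.smul_mem_of_mem_adjoin hF (by simpa using hα) (hgen ▸ Algebra.mem_top)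
  let U' : Submodule K V := { U with smul_mem' := fun k v hv => hK k v hv }
  have hU' (x : K ⊗[F] g) : ∀ v ∈ U', R x v ∈ U' :=
    U'.mem_compatibleMaps_of_one_tmul R.toLinearMap (fun a => hg a) x
  rcases hirr U' hU' with h | h
  · exact .inl (congrArg Submodule.toAddSubgroup h)
  · exact .inr (congrArg Submodule.toAddSubgroup h)
end

section
/- Let F have prime characteristic p, α, β ∈ F with α ≠ 0, and let M = M_{α,β} ∈ gl(p,F) be the upper bidiagonal matrix with diagonal entries β and superdiagonal entries α, 2α, ..., (p-1)α, and let N ∈ gl(p,F) be the matrix with subdiagonal entries all 1 and other entries 0. Then [M, N] = α·I, and the minimal polynomial of M is (X - β)^p. -/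
open Polynomial Finset

section helpers
variable {F : Type*} [Field F] {p : ℕ}

lemma sum_ite_val (c : ℕ) (g : Fin p → F) :
    (∑ m : Fin p, if (m : ℕ) = c then g m else 0) =
      if h : c < p then g ⟨c, h⟩ else 0 := by
  split_ifs with h
  · rw [Finset.sum_eq_single_of_mem ⟨c, h⟩ (Finset.mem_univ _)]
    · simp
    · intro b _ hb
      rw [if_neg]
      intro hbc
      exact hb (Fin.ext hbc)
  · apply Finset.sum_eq_zero
    intro m _
    rw [if_neg]
    intro hm
    exact h (hm ▸ m.isLt)
end helpers

theorem bidiagonal_matrix_bracket_and_minpoly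
    (F : Type*) [Field F] (p : ℕ) [Fact p.Prime] [CharP F p]
    (α β : F) (hα : α ≠ 0)
    (M N : Matrix (Fin p) (Fin p) F)
    (hM : M = Matrix.of fun i j : Fin p =>
      if (i : ℕ) = (j : ℕ) then β
      else if (j : ℕ) = (i : ℕ) + 1 then ((i : ℕ) + 1 : F) * α else 0)
    (hN : N = Matrix.of fun i j : Fin p =>
      if (i : ℕ) = (j : ℕ) + 1 then 1 else 0) :
    M * N - N * M = α • (1 : Matrix (Fin p) (Fin p) F) ∧
    minpoly F M = (Polynomial.X - Polynomial.C β) ^ p := by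
  have hp := (Fact.out : p.Prime)
  have hp2 : 2 ≤ p := hp.two_le
  set A : Matrix (Fin p) (Fin p) F := Matrix.of fun i j : Fin p =>
    if (j : ℕ) = (i : ℕ) + 1 then ((i : ℕ) + 1 : F) * α else 0 with hA
  have hMA : M = β • 1 + A := by
    rw [hM]
    ext i j
    by_cases hij : (i : ℕ) = (j : ℕ)
    · have : i = j := Fin.ext hij
      subst this
      simp [hA, Matrix.one_apply]
    · have : i ≠ j := fun h => hij (h ▸ rfl)
      simp [hA, Matrix.one_apply, hij, this]
  -- entries of A * N and N * A
  have hAN : ∀ i j : Fin p, (A * N) i j =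
      if h : (j : ℕ) + 1 < p then (if (i : ℕ) = (j : ℕ) then ((j : ℕ) + 1 : F) * α else 0) else 0 := by
    intro i j
    rw [Matrix.mul_apply, hN]
    have : ∀ m : Fin p, A i m * Matrix.of (fun i j : Fin p =>
        if (i : ℕ) = (j : ℕ) + 1 then (1:F) else 0) m j =
        if (m : ℕ) = (j : ℕ) + 1 then A i m else 0 := by
      intro m; simp [mul_ite]
    rw [Finset.sum_congr rfl fun m _ => this m, sum_ite_val]
    by_cases h : (j : ℕ) + 1 < p
    · rw [dif_pos h, dif_pos h]
      simp only [hA, Matrix.of_apply, Fin.val_mk]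
      by_cases hij : (i : ℕ) = (j : ℕ)
      · rw [if_pos (by omega), if_pos hij, hij]
      · rw [if_neg (by omega), if_neg hij]
    · rw [dif_neg h, dif_neg h]
  have hNA : ∀ i j : Fin p, (N * A) i j =
      if (i : ℕ) = (j : ℕ) ∧ 0 < (i : ℕ) then ((i : ℕ) : F) * α else 0 := by
    intro i j
    rw [Matrix.mul_apply, hN]
    have : ∀ m : Fin p, Matrix.of (fun i j : Fin p =>
        if (i : ℕ) = (j : ℕ) + 1 then (1:F) else 0) i m * A m j =
        if (m : ℕ) = (i : ℕ) - 1 ∧ 0 < (i:ℕ) then A m j else 0 := by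
      intro m
      simp only [Matrix.of_apply, ite_mul, one_mul, zero_mul]
      congr 1
      simp only [eq_iff_iff]
      omega
    by_cases hi : 0 < (i : ℕ)
    · have hsum : ∀ m : Fin p, ((if (m:ℕ) = (i:ℕ) - 1 ∧ 0 < (i:ℕ) then A m j else 0) : F) =
          (if (m:ℕ) = (i:ℕ) - 1 then A m j else 0) := fun m => by simp [hi]
      rw [Finset.sum_congr rfl fun m _ => (this m).trans (hsum m), sum_ite_val]
      rw [dif_pos (by omega)]
      simp only [hA, Matrix.of_apply, Fin.val_mk]
      by_cases hij : (i : ℕ) = (j : ℕ)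
      · rw [if_pos (by omega), if_pos (And.intro hij hi)]
        congr 1
        rw [Nat.cast_sub hi]
        push_cast
        ring
      · rw [if_neg (by omega), if_neg (by tauto)]
    · have hi0 : (i : ℕ) = 0 := by omega
      rw [Finset.sum_congr rfl fun m _ => this m]
      simp [hi0]
  -- Part 1
  have part1 : M * N - N * M = α • (1 : Matrix (Fin p) (Fin p) F) := by
    have hcomm : M * N - N * M = A * N - N * A := by
      rw [hMA, add_mul, mul_add, Matrix.smul_mul, Matrix.mul_smul, one_mul, mul_one]
      abel
    rw [hcomm]
    ext i j
    rw [Matrix.sub_apply, hAN, hNA]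
    by_cases hij : i = j
    · subst hij
      by_cases h1 : (i : ℕ) + 1 < p
      · rw [dif_pos h1, if_pos (rfl : (i : ℕ) = (i : ℕ))]
        by_cases h0 : 0 < (i : ℕ)
        · rw [if_pos (⟨rfl, h0⟩ : (i : ℕ) = (i : ℕ) ∧ 0 < (i : ℕ))]
          simp only [Matrix.smul_apply, Matrix.one_apply_eq, smul_eq_mul, mul_one]
          ring
        · rw [if_neg (fun hc : (i : ℕ) = (i : ℕ) ∧ 0 < (i : ℕ) => h0 hc.2)]
          have h00 : (i : ℕ) = 0 := by omega
          simp only [Matrix.smul_apply, Matrix.one_apply_eq, smul_eq_mul, mul_one, h00]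
          push_cast
          ring
      · -- i = p - 1
        rw [dif_neg h1, if_pos (⟨rfl, by omega⟩ : (i : ℕ) = (i : ℕ) ∧ 0 < (i : ℕ))]
        have hiv : ((i : ℕ) : F) = -1 := by
          have h2 : (i : ℕ) = p - 1 := by omega
          rw [h2, Nat.cast_sub (by omega), CharP.cast_eq_zero F p]
          simp
        simp only [Matrix.smul_apply, Matrix.one_apply_eq, smul_eq_mul, mul_one, hiv]
        ring
    · have hne : (i : ℕ) ≠ (j : ℕ) := fun h => hij (Fin.ext h)
      simp [Matrix.one_apply, hij, hne]
  refine ⟨part1, ?_⟩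
  -- power structure of A
  have hApow_zero : ∀ (k : ℕ) (i j : Fin p), (j : ℕ) ≠ (i : ℕ) + k → (A ^ k) i j = 0 := by
    intro k
    induction k with
    | zero =>
      intro i j hij
      simp only [pow_zero]
      exact Matrix.one_apply_ne (fun h => hij (by rw [h]; omega))
    | succ k ih =>
      intro i j hij
      rw [pow_succ, Matrix.mul_apply]
      apply Finset.sum_eq_zero
      intro m _
      by_cases hm : (j : ℕ) = (m : ℕ) + 1
      · have : (m : ℕ) ≠ (i : ℕ) + k := by omega
        rw [ih i m this, zero_mul]
      · rw [hA]
        simp only [Matrix.of_apply]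
        rw [if_neg hm, mul_zero]
  have hApow_diag : ∀ (k : ℕ) (hk : k < p), (A ^ k) 0 ⟨k, hk⟩ = (Nat.factorial k : F) * α ^ k := by
    intro k
    induction k with
    | zero =>
      intro hk
      have h0 : (⟨0, hk⟩ : Fin p) = 0 := Fin.ext (by simp)
      rw [pow_zero, h0, Matrix.one_apply_eq]
      simp
    | succ k ih =>
      intro hk
      have hk' : k < p := by omega
      rw [pow_succ, Matrix.mul_apply]
      rw [Finset.sum_eq_single_of_mem ⟨k, hk'⟩ (Finset.mem_univ _)]
      · rw [ih hk']
        have : A ⟨k, hk'⟩ ⟨k + 1, hk⟩ = ((k : ℕ) + 1 : F) * α := by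
          simp [hA]
        rw [this, Nat.factorial_succ]
        push_cast
        ring
      · intro b _ hb
        have : ((⟨k+1, hk⟩ : Fin p) : ℕ) ≠ (b : ℕ) + 1 := by
          simp only [Fin.val_mk]
          intro h
          apply hb
          apply Fin.ext
          simp only [Fin.val_mk]
          omega
        rw [hA]
        simp only [Matrix.of_apply]
        rw [if_neg this, mul_zero]
  -- aeval of powers
  have haev : ∀ n : ℕ, (Polynomial.aeval M) ((X - C β) ^ n) = A ^ n := by
    intro n
    rw [map_pow, map_sub, aeval_X, aeval_C, hMA]
    congr 1
    rw [Algebra.algebraMap_eq_smul_one]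
    abel
  have hAp : A ^ p = 0 := by
    ext i j
    exact hApow_zero p i j (by omega)
  have hdvd : minpoly F M ∣ (X - C β) ^ p :=
    minpoly.dvd F M (by rw [haev, hAp])
  have hint : IsIntegral F M := ⟨(X - C β) ^ p, (monic_X_sub_C β).pow p, by
    rw [← aeval_def, haev, hAp]⟩
  obtain ⟨k, hkp, hassoc⟩ := (dvd_prime_pow (prime_X_sub_C β) p).mp hdvd
  have hmin : minpoly F M = (X - C β) ^ k :=
    Polynomial.eq_of_monic_of_associated (minpoly.monic hint) ((monic_X_sub_C β).pow k) hassoc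
  have hkeq : k = p := by
    by_contra hne
    have hk : k < p := lt_of_le_of_ne hkp hne
    have : A ^ k = 0 := by
      rw [← haev, ← hmin, minpoly.aeval]
    have hz : (A ^ k) 0 ⟨k, hk⟩ = 0 := by rw [this]; rfl
    rw [hApow_diag k hk] at hz
    have hfac : (Nat.factorial k : F) ≠ 0 := by
      rw [Ne, CharP.cast_eq_zero_iff F p]
      rw [hp.dvd_factorial]
      omega
    exact (mul_ne_zero hfac (pow_ne_zero k hα)) hz
  rw [hmin, hkeq]
end
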